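/- Call a subset S of the set of Lagrangian subspaces of (ℝ^{2n}, ω) a circle if there exist g ∈ Sp(2n,ℝ) and a nondegenerate symmetric real n×n matrix B such that S = {g·Γ_{λB} : λ ∈ ℝ} ∪ {g·L∞}, where Γ_M = {(x, Mx) : x ∈ ℝⁿ} and L∞ = {0} × ℝⁿ. Let L1, L2, L3, L4 be Lagrangian subspaces lying on a common circle S, with L1 transverse to L2 and L3 transverse to L4. Then the composition of Lagrangian reflections T = Refl(L1,L2) ∘ Refl(L3,L4) preserves S: for every L ∈ S one has T(L) ∈ S. -/

import Mathlib

open Module Submodule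

/-- `ℝ^{2n} = ℝⁿ × ℝⁿ`. -/
abbrev SympV (n : ℕ) := (Fin n → ℝ) × (Fin n → ℝ)

/-- The standard symplectic form `ω((x,y),(x',y')) = ⟨x,y'⟩ - ⟨y,x'⟩`. -/
def stdOmega (n : ℕ) (p q : SympV n) : ℝ :=
  (∑ i, p.1 i * q.2 i) - ∑ i, p.2 i * q.1 i

/-- A Lagrangian: an `n`-dimensional subspace on which `ω` vanishes identically. -/
def IsLagrangian (n : ℕ) (L : Submodule ℝ (SympV n)) : Prop :=
  finrank ℝ L = n ∧ ∀ u ∈ L, ∀ v ∈ L, stdOmega n u v = 0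

/-- Membership in `Sp(2n,ℝ)` for a linear automorphism of `ℝ^{2n}`. -/
def IsSymplectic (n : ℕ) (g : SympV n ≃ₗ[ℝ] SympV n) : Prop :=
  ∀ u v, stdOmega n (g u) (g v) = stdOmega n u v

/-- `Γ_M = {(x, Mx) : x ∈ ℝⁿ}`. -/
def matGraph (n : ℕ) (M : Matrix (Fin n) (Fin n) ℝ) : Submodule ℝ (SympV n) :=
  LinearMap.graph M.mulVecLin

/-- `L∞ = {0} × ℝⁿ`. -/
def lagInfty (n : ℕ) : Submodule ℝ (SympV n) :=
  (⊥ : Submodule ℝ (Fin n → ℝ)).prod (⊤ : Submodule ℝ (Fin n → ℝ))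

/-- A circle of Lagrangians: the `Sp(2n,ℝ)`-image of
`{Γ_{λB} : λ ∈ ℝ} ∪ {L∞}` for a nondegenerate symmetric matrix `B`. -/
def IsCircle (n : ℕ) (S : Set (Submodule ℝ (SympV n))) : Prop :=
  ∃ g : SympV n ≃ₗ[ℝ] SympV n, IsSymplectic n g ∧
    ∃ B : Matrix (Fin n) (Fin n) ℝ, B.IsSymm ∧ IsUnit B.det ∧
      S = (Set.range fun lam : ℝ =>
            Submodule.map (g : SympV n →ₗ[ℝ] SympV n) (matGraph n (lam • B))) ∪
          {Submodule.map (g : SympV n →ₗ[ℝ] SympV n) (lagInfty n)}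

/-- The projection onto `U` with kernel `W`, as an endomorphism of `V`. -/
noncomputable def projTo {V : Type*} [AddCommGroup V] [Module ℝ V]
    (U W : Submodule ℝ V) (h : IsCompl U W) : V →ₗ[ℝ] V :=
  U.subtype ∘ₗ U.linearProjOfIsCompl W h

/-- The reflection in the pair `(U, W)`: `π_U^W - π_W^U`. -/
noncomputable def reflPair {V : Type*} [AddCommGroup V] [Module ℝ V]
    (U W : Submodule ℝ V) (h : IsCompl U W) : V →ₗ[ℝ] V :=
  projTo U W h - projTo W U h.symm

/-!
Write `ℝ^{2n} = ℝ² ⊗ ℝⁿ` through `w ⊗ x ↦ (w₀ x, w₁ B x)`. The standard circle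
`{Γ_{aB}} ∪ {L∞}` is then the set of subspaces `w ⊗ ℝⁿ`, `w ≠ 0`, a copy of `ℝP¹`, and every
`A ∈ GL₂(ℝ)` acts on `ℝ^{2n}` as `A ⊗ id` (the block matrix `[[a₀₀, a₀₁ B⁻¹], [a₁₀ B, a₁₁]]`),
permuting these subspaces. Transversality of `w₁ ⊗ ℝⁿ` and `w₂ ⊗ ℝⁿ` forces `w₁, w₂` to be
independent, and the Lagrangian reflection in this pair is `A ⊗ id` for the reflection `A` of `ℝ²`
fixing `w₁` and negating `w₂`. So every such reflection preserves the standard circle; a general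
circle is its image under some `g`, and reflections are equivariant under `g`. Hence both
reflections, and so their composition, preserve the circle.
-/

open Matrix

lemma Matrix.nonsing_inv_mulVec_mulVec {m R : Type*} [Fintype m] [DecidableEq m] [CommRing R]
    {A : Matrix m m R} (hA : IsUnit A.det) (x : m → R) : A⁻¹ *ᵥ (A *ᵥ x) = x := by
  rw [mulVec_mulVec, nonsing_inv_mul _ hA, one_mulVec]

lemma Matrix.mulVec_nonsing_inv_mulVec {m R : Type*} [Fintype m] [DecidableEq m] [CommRing R]
    {A : Matrix m m R} (hA : IsUnit A.det) (x : m → R) : A *ᵥ (A⁻¹ *ᵥ x) = x := by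
  rw [mulVec_mulVec, mul_nonsing_inv _ hA, one_mulVec]

section Reflection

variable {V : Type*} [AddCommGroup V] [Module ℝ V] {U W : Submodule ℝ V}

lemma projTo_eq_projection (h : IsCompl U W) : projTo U W h = U.projection W h := rfl

lemma reflPair_apply_of_mem_left (h : IsCompl U W) {u : V} (hu : u ∈ U) :
    reflPair U W h u = u := by
  simp [reflPair, projTo_eq_projection, projection_apply_of_mem_left h hu,
    projection_apply_of_mem_right h.symm hu]

lemma reflPair_apply_of_mem_right (h : IsCompl U W) {w : V} (hw : w ∈ W) :
    reflPair U W h w = -w := by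
  simp [reflPair, projTo_eq_projection, projection_apply_of_mem_right h hw,
    projection_apply_of_mem_left h.symm hw]

lemma reflPair_eq_of_forall_mem (h : IsCompl U W) (f : V →ₗ[ℝ] V)
    (hU : ∀ u ∈ U, f u = u) (hW : ∀ w ∈ W, f w = -w) : reflPair U W h = f := by
  refine LinearMap.ext fun x => ?_
  obtain ⟨u, hu, w, hw, rfl⟩ := Submodule.mem_sup.mp (h.sup_eq_top ▸ mem_top : x ∈ U ⊔ W)
  rw [map_add, map_add, reflPair_apply_of_mem_left h hu, reflPair_apply_of_mem_right h hw,
    hU u hu, hW w hw]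

lemma reflPair_map_comp_eq_comp (e : V ≃ₗ[ℝ] V) (h : IsCompl U W)
    (h' : IsCompl (U.map (e : V →ₗ[ℝ] V)) (W.map (e : V →ₗ[ℝ] V))) :
    reflPair (U.map (e : V →ₗ[ℝ] V)) (W.map (e : V →ₗ[ℝ] V)) h' ∘ₗ (e : V →ₗ[ℝ] V)
      = (e : V →ₗ[ℝ] V) ∘ₗ reflPair U W h := by
  rw [reflPair_eq_of_forall_mem h' ((e : V →ₗ[ℝ] V) ∘ₗ reflPair U W h ∘ₗ (e.symm : V →ₗ[ℝ] V))]
  · exact LinearMap.ext fun x => by simp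
  · rintro _ ⟨u, hu, rfl⟩
    simp [reflPair_apply_of_mem_left h hu]
  · rintro _ ⟨w, hw, rfl⟩
    simp [reflPair_apply_of_mem_right h hw]

end Reflection

noncomputable section StandardCircle

variable {n : ℕ} (B : Matrix (Fin n) (Fin n) ℝ)

def circleEmbedding (w : Fin 2 → ℝ) : (Fin n → ℝ) →ₗ[ℝ] SympV n :=
  (w 0 • LinearMap.id).prod (w 1 • B.mulVecLin)

@[simp] lemma circleEmbedding_apply (w : Fin 2 → ℝ) (x : Fin n → ℝ) :
    circleEmbedding B w x = (w 0 • x, w 1 • B *ᵥ x) := rfl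

def circlePoint (w : Fin 2 → ℝ) : Submodule ℝ (SympV n) :=
  LinearMap.range (circleEmbedding B w)

def stdCircle : Set (Submodule ℝ (SympV n)) :=
  Set.range (fun a : ℝ => matGraph n (a • B)) ∪ {lagInfty n}

def blockMap (A : Matrix (Fin 2) (Fin 2) ℝ) : SympV n →ₗ[ℝ] SympV n :=
  (A 0 0 • LinearMap.fst ℝ _ _ + A 0 1 • (B⁻¹.mulVecLin ∘ₗ LinearMap.snd ℝ _ _)).prod
    (A 1 0 • (B.mulVecLin ∘ₗ LinearMap.fst ℝ _ _) + A 1 1 • LinearMap.snd ℝ _ _)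

@[simp] lemma blockMap_apply (A : Matrix (Fin 2) (Fin 2) ℝ) (z : SympV n) :
    blockMap B A z = (A 0 0 • z.1 + A 0 1 • B⁻¹ *ᵥ z.2, A 1 0 • B *ᵥ z.1 + A 1 1 • z.2) := rfl

variable {B}

lemma blockMap_comp_circleEmbedding (hB : IsUnit B.det) (A : Matrix (Fin 2) (Fin 2) ℝ)
    (w : Fin 2 → ℝ) : blockMap B A ∘ₗ circleEmbedding B w = circleEmbedding B (A *ᵥ w) := by
  refine LinearMap.ext fun x => ?_
  simp only [LinearMap.comp_apply, circleEmbedding_apply, blockMap_apply, mulVec_smul,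
    nonsing_inv_mulVec_mulVec hB]
  ext <;> simp only [Pi.add_apply, Pi.smul_apply, smul_eq_mul, mulVec, dotProduct, Fin.sum_univ_two] <;>
    ring

lemma map_blockMap_circlePoint (hB : IsUnit B.det) (A : Matrix (Fin 2) (Fin 2) ℝ)
    (w : Fin 2 → ℝ) : (circlePoint B w).map (blockMap B A) = circlePoint B (A *ᵥ w) := by
  rw [circlePoint, circlePoint, ← LinearMap.range_comp, blockMap_comp_circleEmbedding hB]

lemma circlePoint_smul {c : ℝ} (hc : c ≠ 0) (w : Fin 2 → ℝ) :
    circlePoint B (c • w) = circlePoint B w := by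
  have : circleEmbedding B (c • w) = circleEmbedding B w ∘ₗ (c • LinearMap.id) :=
    LinearMap.ext fun x => by simp [smul_smul]
  rw [circlePoint, circlePoint, this, LinearMap.range_comp_of_range_eq_top]
  exact LinearMap.range_eq_top.mpr fun x => ⟨c⁻¹ • x, by simp [hc]⟩

lemma circlePoint_one (a : ℝ) : circlePoint B ![1, a] = matGraph n (a • B) := by
  rw [circlePoint, matGraph, LinearMap.graph_eq_range_prod]
  congr 1
  exact LinearMap.ext fun x => by simp

lemma circlePoint_zero_one (hB : IsUnit B.det) : circlePoint B ![0, 1] = lagInfty n := by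
  ext ⟨x, y⟩
  simp only [circlePoint, LinearMap.mem_range, circleEmbedding_apply, lagInfty, mem_prod, mem_bot,
    mem_top, and_true]
  constructor
  · rintro ⟨v, hv⟩
    simpa using (congrArg Prod.fst hv).symm
  · rintro rfl
    exact ⟨B⁻¹ *ᵥ y, by simp [mulVec_nonsing_inv_mulVec hB]⟩

lemma mem_stdCircle_iff (hB : IsUnit B.det) {L : Submodule ℝ (SympV n)} :
    L ∈ stdCircle B ↔ ∃ w ≠ 0, L = circlePoint B w := by
  constructor
  · rintro (⟨a, rfl⟩ | rfl)
    · exact ⟨![1, a], by simp, (circlePoint_one a).symm⟩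
    · exact ⟨![0, 1], by simp, (circlePoint_zero_one hB).symm⟩
  · rintro ⟨w, hw, rfl⟩
    by_cases h0 : w 0 = 0
    · have h1 : w 1 ≠ 0 := fun h1 => hw (by ext i; fin_cases i <;> simp [h0, h1])
      have : w = w 1 • ![0, 1] := by ext i; fin_cases i <;> simp [h0]
      right
      rw [this, circlePoint_smul h1, circlePoint_zero_one hB]
      rfl
    · left
      refine ⟨w 1 / w 0, ?_⟩
      change matGraph n _ = _
      rw [← circlePoint_one, ← circlePoint_smul h0]
      congr 1
      ext i; fin_cases i <;> simp [h0, mul_div_cancel₀]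

lemma circleEmbedding_injective (hB : IsUnit B.det) {w : Fin 2 → ℝ} (hw : w ≠ 0) :
    Function.Injective (circleEmbedding B w) := by
  rw [← LinearMap.ker_eq_bot, LinearMap.ker_eq_bot']
  intro x hx
  obtain ⟨i, hi⟩ := Function.ne_iff.mp hw
  fin_cases i
  · exact (smul_eq_zero.mp (congrArg Prod.fst hx)).resolve_left hi
  · have hBx : B *ᵥ x = 0 := (smul_eq_zero.mp (congrArg Prod.snd hx)).resolve_left hi
    rw [← nonsing_inv_mulVec_mulVec hB x, hBx, mulVec_zero]

lemma det_ne_zero_of_disjoint_circlePoint (hB : IsUnit B.det) (hn : n ≠ 0)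
    {w₁ w₂ : Fin 2 → ℝ} (hw₁ : w₁ ≠ 0) (hw₂ : w₂ ≠ 0)
    (h : Disjoint (circlePoint B w₁) (circlePoint B w₂)) : (Matrix.of ![w₁, w₂]).det ≠ 0 := by
  intro hdet
  obtain ⟨v, hv, hvw⟩ := exists_vecMul_eq_zero_iff.mpr hdet
  obtain ⟨x, hx⟩ : ∃ x : Fin n → ℝ, x ≠ 0 := ⟨Pi.single ⟨0, Nat.pos_of_ne_zero hn⟩ 1, by simp⟩
  have hsum : circleEmbedding B w₁ (v 0 • x) + circleEmbedding B w₂ (v 1 • x) = 0 := by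
    have h0 : v 0 * w₁ 0 + v 1 * w₂ 0 = 0 := by
      simpa [vecMul, dotProduct, Fin.sum_univ_two] using congrFun hvw 0
    have h1 : v 0 * w₁ 1 + v 1 * w₂ 1 = 0 := by
      simpa [vecMul, dotProduct, Fin.sum_univ_two] using congrFun hvw 1
    ext <;> simp [smul_smul, ← add_smul, h0, h1]
  have hzero : circleEmbedding B w₁ (v 0 • x) = 0 := by
    refine disjoint_def.mp h _ (LinearMap.mem_range_self _ _) ?_
    rw [eq_neg_of_add_eq_zero_left hsum]
    exact neg_mem (LinearMap.mem_range_self _ _)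
  have h₁ : v 0 • x = 0 := circleEmbedding_injective hB hw₁ (by rw [hzero, map_zero])
  have h₂ : v 1 • x = 0 :=
    circleEmbedding_injective hB hw₂ (by rw [map_zero, ← hsum, hzero, zero_add])
  refine hv (funext fun i => ?_)
  fin_cases i
  exacts [(smul_eq_zero.mp h₁).resolve_right hx, (smul_eq_zero.mp h₂).resolve_right hx]

lemma exists_isUnit_mulVec_eq_and_eq_neg {w₁ w₂ : Fin 2 → ℝ} (h : (Matrix.of ![w₁, w₂]).det ≠ 0) :
    ∃ A : Matrix (Fin 2) (Fin 2) ℝ, IsUnit A ∧ A *ᵥ w₁ = w₁ ∧ A *ᵥ w₂ = -w₂ := by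
  set P := (Matrix.of ![w₁, w₂])ᵀ
  have hP : IsUnit P.det := by rw [det_transpose]; exact h.isUnit
  have hcol : ∀ i, P *ᵥ Pi.single i 1 = ![w₁, w₂] i := fun i => by
    ext j; simp [P]
  set D : Matrix (Fin 2) (Fin 2) ℝ := diagonal ![1, -1]
  have hconj : ∀ i, (P * D * P⁻¹) *ᵥ (P *ᵥ Pi.single i 1) = ![1, -1] i • P *ᵥ Pi.single i 1 := by
    intro i
    rw [← mulVec_mulVec, ← mulVec_mulVec, nonsing_inv_mulVec_mulVec hP, ← mulVec_smul]
    congr 1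
    ext j; fin_cases i <;> fin_cases j <;> simp [D]
  refine ⟨P * D * P⁻¹, ?_, ?_, ?_⟩
  · rw [isUnit_iff_isUnit_det, det_mul, det_mul]
    exact (hP.mul (by simp [D])).mul (isUnit_nonsing_inv_det P hP)
  · simpa [hcol] using hconj 0
  · simpa [hcol] using hconj 1

lemma exists_reflPair_circlePoint_eq_blockMap (hB : IsUnit B.det) (hn : n ≠ 0)
    {w₁ w₂ : Fin 2 → ℝ} (hw₁ : w₁ ≠ 0) (hw₂ : w₂ ≠ 0)
    (h : IsCompl (circlePoint B w₁) (circlePoint B w₂)) :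
    ∃ A : Matrix (Fin 2) (Fin 2) ℝ, IsUnit A ∧ reflPair _ _ h = blockMap B A := by
  obtain ⟨A, hA, hA₁, hA₂⟩ := exists_isUnit_mulVec_eq_and_eq_neg
    (det_ne_zero_of_disjoint_circlePoint hB hn hw₁ hw₂ h.disjoint)
  refine ⟨A, hA, reflPair_eq_of_forall_mem h _ ?_ ?_⟩
  · rintro _ ⟨x, rfl⟩
    rw [← LinearMap.comp_apply, blockMap_comp_circleEmbedding hB, hA₁]
  · rintro _ ⟨x, rfl⟩
    rw [← LinearMap.comp_apply, blockMap_comp_circleEmbedding hB, hA₂]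
    ext <;> simp

lemma map_reflPair_mem_stdCircle (hB : IsUnit B.det) (hn : n ≠ 0)
    {U W L : Submodule ℝ (SympV n)} (hU : U ∈ stdCircle B) (hW : W ∈ stdCircle B)
    (h : IsCompl U W) (hL : L ∈ stdCircle B) : L.map (reflPair U W h) ∈ stdCircle B := by
  obtain ⟨w₁, hw₁, rfl⟩ := (mem_stdCircle_iff hB).mp hU
  obtain ⟨w₂, hw₂, rfl⟩ := (mem_stdCircle_iff hB).mp hW
  obtain ⟨w, hw, rfl⟩ := (mem_stdCircle_iff hB).mp hL
  obtain ⟨A, hA, hrefl⟩ := exists_reflPair_circlePoint_eq_blockMap hB hn hw₁ hw₂ h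
  rw [hrefl, map_blockMap_circlePoint hB, mem_stdCircle_iff hB]
  refine ⟨A *ᵥ w, fun hAw => hw ?_, rfl⟩
  exact mulVec_injective_iff_isUnit.mpr hA (by rw [hAw, mulVec_zero])

end StandardCircle

lemma IsCircle.exists_eq_image {n : ℕ} {S : Set (Submodule ℝ (SympV n))} (hS : IsCircle n S) :
    ∃ (g : SympV n ≃ₗ[ℝ] SympV n) (B : Matrix (Fin n) (Fin n) ℝ), IsUnit B.det ∧
      S = Submodule.map (g : SympV n →ₗ[ℝ] SympV n) '' stdCircle B := by
  obtain ⟨g, -, B, -, hB, rfl⟩ := hS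
  refine ⟨g, B, hB, ?_⟩
  rw [stdCircle, Set.image_union, Set.image_singleton, ← Set.range_comp]
  rfl

lemma IsCircle.map_reflPair_mem {n : ℕ} {S : Set (Submodule ℝ (SympV n))} (hS : IsCircle n S)
    {U W L : Submodule ℝ (SympV n)} (hU : U ∈ S) (hW : W ∈ S) (h : IsCompl U W) (hL : L ∈ S) :
    L.map (reflPair U W h) ∈ S := by
  rcases eq_or_ne n 0 with rfl | hn
  · rwa [Subsingleton.elim (L.map _) L]
  obtain ⟨g, B, hB, rfl⟩ := hS.exists_eq_image
  obtain ⟨U, hU, rfl⟩ := hU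
  obtain ⟨W, hW, rfl⟩ := hW
  obtain ⟨L, hL, rfl⟩ := hL
  have h' : IsCompl U W := (orderIsoMapComap g).isCompl_iff.mpr h
  refine ⟨_, map_reflPair_mem_stdCircle hB hn hU hW h' hL, ?_⟩
  rw [← map_comp, ← map_comp, reflPair_map_comp_eq_comp g h' h]

theorem stmt17 (n : ℕ) (S : Set (Submodule ℝ (SympV n))) (hS : IsCircle n S)
    (L1 L2 L3 L4 : Submodule ℝ (SympV n))
    (hL1 : L1 ∈ S) (hL2 : L2 ∈ S) (hL3 : L3 ∈ S) (hL4 : L4 ∈ S)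
    (h12 : IsCompl L1 L2) (h34 : IsCompl L3 L4) :
    ∀ L ∈ S, Submodule.map (reflPair L1 L2 h12 ∘ₗ reflPair L3 L4 h34) L ∈ S := by
  intro L hL
  rw [Submodule.map_comp]
  exact hS.map_reflPair_mem hL1 hL2 h12 (hS.map_reflPair_mem hL3 hL4 h34 hL)
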